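/- For distinct letters i,j ∈ X, the intersection π(C_i) ∩ π(C_j) ⊆ K, where C_ℓ = {w ∈ Σ : w₁ = ℓ}, is either empty or homeomorphic to the Cantor space {0,1}^ℕ (with the product topology). It is empty exactly when j ≢ i ± 1 mod 6. -/
import Mathlib


open Classical

/-- The space `Σ` of infinite words over the alphabet `X = {0,1,2,3,4,5} = ℤ/6`
(indexed from `0`: the letter `w₁` of the paper is `w 0`). -/
abbrev Word := ℕ → ZMod 6

/-- The metric `δ_r` on a word space: `δ_r(w,v) = r^ℓ` where `ℓ ≥ 1` is the first
(1-indexed) position at which `w` and `v` differ, and `δ_r(w,w) = 0`. -/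
noncomputable def wordDist {X : Type*} (r : ℝ) (w v : ℕ → X) : ℝ :=
  if h : w = v then 0
  else r ^ (Nat.find (Function.ne_iff.mp h) + 1)

/-- Prepending a letter to an infinite word: `σ_i(w) = iw`. -/
def prepend {X : Type*} (i : X) (w : ℕ → X) : ℕ → X
  | 0 => i
  | n + 1 => w n

/-- `α_k = u₁ + ⋯ + u_k` in `ℤ/6` (the sum of the first `k` letters of `u`). -/
def alphaSum (u : Word) (k : ℕ) : ZMod 6 := ∑ j ∈ Finset.range k, u j

/-- The map `f : Σ → Σ`, `f(u) = v` with `v₁ = u₁` and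
`v_m = (−1)^{α_{m−1}} u_m + α_{m−1}` (mod 6); here `(−1)^α` is `+1` when `α ∈ ℤ/6` is
even and `−1` when `α` is odd.  (In 0-indexed form, position `m` corresponds to index
`m−1`, and `α_0 = 0` is even, so the case `v₁ = u₁` is subsumed.) -/
noncomputable def fMap (u : Word) : Word := fun n =>
  (if Even (alphaSum u n) then u n else -(u n)) + alphaSum u n

/-- The generating relation of `∼`: `u` and `w` are of the forms `x i α v` and
`x j α v`, where `x` is a finite word (of length `ℓ`, occupying indices `< ℓ`),
`j = i + 1` (mod 6), `α ∈ {3,4}` if `i` is odd and `α ∈ {1,2}` if `i` is even, and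
`v ∈ {0,5}^ℕ`. -/
def Tilde (u w : Word) : Prop :=
  ∃ ℓ : ℕ, (∀ m < ℓ, u m = w m) ∧ w ℓ = u ℓ + 1 ∧ (∀ m > ℓ, u m = w m) ∧
    ((¬ Even (u ℓ) ∧ (u (ℓ + 1) = 3 ∨ u (ℓ + 1) = 4)) ∨
      (Even (u ℓ) ∧ (u (ℓ + 1) = 1 ∨ u (ℓ + 1) = 2))) ∧
    (∀ m, ℓ + 2 ≤ m → u m = 0 ∨ u m = 5)

/-- The equivalence relation `∼` on `Σ` generated by `Tilde`, as a setoid. -/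
def simSetoid : Setoid Word := ⟨Relation.EqvGen Tilde, Relation.EqvGen.is_equivalence _⟩

/-- The Strichartz hexacarpet `K = Σ/∼` (with the quotient topology, `ℤ/6` being
discrete and `Σ` carrying the product topology). -/
def Hexacarpet := Quotient simSetoid

instance : TopologicalSpace Hexacarpet :=
  instTopologicalSpaceQuotient

/-- The quotient map `π : Σ → K`. -/
def piK : Word → Hexacarpet := Quotient.mk simSetoid

/-- The cylinder `C_ℓ = {w ∈ Σ : w₁ = ℓ}` of words starting with the letter `ℓ`. -/
def cyl (ℓ : ZMod 6) : Set Word := {w | w 0 = ℓ}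


/-! ### Auxiliary material -/

instance : DecidablePred (Even : ZMod 6 → Prop) := fun _ => Fintype.decidableExistsFintype

/-- Repackaged pointwise form. -/
def TildeAt (u w : Word) (ℓ : ℕ) : Prop :=
  (∀ m ≠ ℓ, u m = w m) ∧ w ℓ = u ℓ + 1 ∧
    ((¬ Even (u ℓ) ∧ (u (ℓ + 1) = 3 ∨ u (ℓ + 1) = 4)) ∨
      (Even (u ℓ) ∧ (u (ℓ + 1) = 1 ∨ u (ℓ + 1) = 2))) ∧
    (∀ m, ℓ + 2 ≤ m → u m = 0 ∨ u m = 5)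

lemma tilde_iff {u w : Word} : Tilde u w ↔ ∃ ℓ, TildeAt u w ℓ := by
  constructor
  · rintro ⟨ℓ, h1, h2, h3, h4, h5⟩
    exact ⟨ℓ, fun m hm => (Nat.lt_or_ge m ℓ).elim (h1 m) (fun h => h3 m (lt_of_le_of_ne h (Ne.symm hm))), h2, h4, h5⟩
  · rintro ⟨ℓ, h1, h2, h4, h5⟩
    exact ⟨ℓ, fun m hm => h1 m hm.ne, h2, fun m hm => h1 m hm.ne', h4, h5⟩

/-- The marker predicate determining the position of a Tilde move. -/
def Marker (v : Word) (ℓ : ℕ) : Prop :=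
  (v (ℓ + 1) ≠ 0 ∧ v (ℓ + 1) ≠ 5) ∧ ∀ m, ℓ + 2 ≤ m → v m = 0 ∨ v m = 5

lemma marker_uniq {v : Word} {ℓ ℓ' : ℕ} (h : Marker v ℓ) (h' : Marker v ℓ') : ℓ = ℓ' := by
  rcases Nat.lt_trichotomy ℓ ℓ' with hlt | he | hlt
  · rcases h.2 (ℓ' + 1) (by omega) with h0 | h5
    · exact absurd h0 h'.1.1
    · exact absurd h5 h'.1.2
  · exact he
  · rcases h'.2 (ℓ + 1) (by omega) with h0 | h5
    · exact absurd h0 h.1.1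
    · exact absurd h5 h.1.2

lemma cond_ne {x : ZMod 6} (h : x = 3 ∨ x = 4 ∨ x = 1 ∨ x = 2) : x ≠ 0 ∧ x ≠ 5 := by
  rcases h with h|h|h|h <;> subst h <;> exact ⟨by decide, by decide⟩

lemma TildeAt.cond' {u w : Word} {ℓ : ℕ} (h : TildeAt u w ℓ) :
    u (ℓ + 1) = 3 ∨ u (ℓ + 1) = 4 ∨ u (ℓ + 1) = 1 ∨ u (ℓ + 1) = 2 := by
  rcases h.2.2.1 with ⟨_, h'|h'⟩ | ⟨_, h'|h'⟩ <;> tauto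

lemma TildeAt.marker_left {u w : Word} {ℓ : ℕ} (h : TildeAt u w ℓ) : Marker u ℓ :=
  ⟨cond_ne h.cond', h.2.2.2⟩

lemma TildeAt.marker_right {u w : Word} {ℓ : ℕ} (h : TildeAt u w ℓ) : Marker w ℓ := by
  refine ⟨?_, fun m hm => ?_⟩
  · rw [← h.1 (ℓ+1) (by omega)]; exact cond_ne h.cond'
  · rw [← h.1 m (by omega)]; exact h.2.2.2 m hm

/-- Position of a TildeAt is where the words differ. -/
lemma TildeAt.loc {u w : Word} {ℓ m : ℕ} (h : TildeAt u w ℓ) (hm : u m ≠ w m) : ℓ = m := by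
  by_contra hne
  exact hm (h.1 m (fun he => hne he.symm))

lemma TildeAt.ne_at {u w : Word} {ℓ : ℕ} (h : TildeAt u w ℓ) : u ℓ ≠ w ℓ := by
  have hall : ∀ x : ZMod 6, x + 1 ≠ x := by decide
  rw [h.2.1]; exact (hall _).symm

/-- No chain of two forward moves. -/
lemma no_chain {u v w : Word} {ℓ ℓ' : ℕ} (h : TildeAt u v ℓ) (h' : TildeAt v w ℓ') : False := by
  have he : ℓ = ℓ' := marker_uniq h.marker_right h'.marker_left
  subst he
  have hv1 : v (ℓ+1) = u (ℓ+1) := (h.1 (ℓ+1) (by omega)).symm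
  have hvl : v ℓ = u ℓ + 1 := h.2.1
  have hall : ∀ x : ZMod 6, Even (x+1) ↔ ¬ Even x := by decide
  have hpar : Even (v ℓ) ↔ ¬ Even (u ℓ) := by rw [hvl]; exact hall _
  rcases h.2.2.1 with ⟨hp, hc⟩ | ⟨hp, hc⟩ <;> rcases h'.2.2.1 with ⟨hp', hc'⟩ | ⟨hp', hc'⟩
  · exact hp' (hpar.mpr hp)
  · rw [hv1] at hc'
    rcases hc with h1|h1 <;> rcases hc' with h2|h2 <;> rw [h1] at h2 <;> exact absurd h2 (by decide)
  · rw [hv1] at hc'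
    rcases hc with h1|h1 <;> rcases hc' with h2|h2 <;> rw [h1] at h2 <;> exact absurd h2 (by decide)
  · exact (hpar.mp hp') hp

/-- Forward uniqueness. -/
lemma fwd_uniq {u v w : Word} {ℓ ℓ' : ℕ} (h : TildeAt u v ℓ) (h' : TildeAt u w ℓ') : v = w := by
  have he : ℓ = ℓ' := marker_uniq h.marker_left h'.marker_left
  subst he
  funext m
  by_cases hm : m = ℓ
  · subst hm; rw [h.2.1, h'.2.1] at *
  · rw [← h.1 m hm, ← h'.1 m hm]

/-- Backward uniqueness. -/
lemma bwd_uniq {u v w : Word} {ℓ ℓ' : ℕ} (h : TildeAt v u ℓ) (h' : TildeAt w u ℓ') : v = w := by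
  have he : ℓ = ℓ' := marker_uniq h.marker_right h'.marker_right
  subst he
  funext m
  by_cases hm : m = ℓ
  · subst hm
    have h1 : u m = v m + 1 := h.2.1
    have h2 : u m = w m + 1 := h'.2.1
    have := h1.symm.trans h2
    exact add_right_cancel this
  · rw [h.1 m hm, ← h'.1 m hm]

def Rel' (u w : Word) : Prop := u = w ∨ Tilde u w ∨ Tilde w u

lemma rel'_symm {u w : Word} (h : Rel' u w) : Rel' w u := by
  rcases h with h|h|h
  · exact Or.inl h.symm
  · exact Or.inr (Or.inr h)
  · exact Or.inr (Or.inl h)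

lemma rel'_trans {u v w : Word} (h : Rel' u v) (h' : Rel' v w) : Rel' u w := by
  rcases h with rfl|h|h
  · exact h'
  · rcases h' with rfl|h'|h'
    · exact Or.inr (Or.inl h)
    · rcases tilde_iff.mp h with ⟨ℓ, ha⟩
      rcases tilde_iff.mp h' with ⟨ℓ', hb⟩
      exact absurd (no_chain ha hb) not_false
    · rcases tilde_iff.mp h with ⟨ℓ, ha⟩
      rcases tilde_iff.mp h' with ⟨ℓ', hb⟩
      exact Or.inl (bwd_uniq ha hb)
  · rcases h' with rfl|h'|h'
    · exact Or.inr (Or.inr h)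
    · rcases tilde_iff.mp h with ⟨ℓ, ha⟩
      rcases tilde_iff.mp h' with ⟨ℓ', hb⟩
      exact Or.inl (fwd_uniq ha hb)
    · rcases tilde_iff.mp h with ⟨ℓ, ha⟩
      rcases tilde_iff.mp h' with ⟨ℓ', hb⟩
      exact absurd (no_chain hb ha) not_false

lemma eqvGen_iff {u w : Word} : Relation.EqvGen Tilde u w ↔ Rel' u w := by
  constructor
  · intro h
    induction h with
    | rel x y h => exact Or.inr (Or.inl h)
    | refl x => exact Or.inl rfl
    | symm x y _ ih => exact rel'_symm ih
    | trans x y z _ _ ih1 ih2 => exact rel'_trans ih1 ih2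
  · rintro (rfl|h|h)
    · exact Relation.EqvGen.refl u
    · exact Relation.EqvGen.rel _ _ h
    · exact Relation.EqvGen.symm _ _ (Relation.EqvGen.rel _ _ h)

/-! ### Closedness of the relation -/

def RelSet : Set (Word × Word) := {p | Rel' p.1 p.2}

lemma isOpen_pairCyl (s : Finset ℕ) (a b : Word) :
    IsOpen {q : Word × Word | ∀ m ∈ s, q.1 m = a m ∧ q.2 m = b m} := by
  have : {q : Word × Word | ∀ m ∈ s, q.1 m = a m ∧ q.2 m = b m} =
      ⋂ m ∈ s, ({q : Word × Word | q.1 m = a m} ∩ {q | q.2 m = b m}) := by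
    ext q; simp [Set.mem_iInter, forall_and]
  rw [this]
  refine isOpen_biInter_finset fun m _ => IsOpen.inter ?_ ?_
  · show IsOpen ((fun q : Word × Word => q.1 m) ⁻¹' {a m})
    exact (isOpen_discrete _).preimage ((continuous_apply m).comp continuous_fst)
  · show IsOpen ((fun q : Word × Word => q.2 m) ⁻¹' {b m})
    exact (isOpen_discrete _).preimage ((continuous_apply m).comp continuous_snd)

lemma two_zmod : (2 : ZMod 6) ≠ 0 := by decide

lemma not_plus_two {x : ZMod 6} (h : x = x + 1 + 1) : False := by
  rw [add_assoc] at h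
  exact absurd (left_eq_add.mp h) (by decide)

lemma isClosed_relSet : IsClosed RelSet := by
  rw [← isOpen_compl_iff]
  rw [isOpen_iff_forall_mem_open]
  rintro ⟨u, w⟩ hp
  simp only [Set.mem_compl_iff, RelSet, Set.mem_setOf_eq, Rel', not_or] at hp
  obtain ⟨hne, hfw, hbw⟩ := hp
  obtain ⟨m0, hm0⟩ := Function.ne_iff.mp hne
  -- helper producing the goal from a finite set s ∋ m0 and a refutation
  have mk : ∀ s : Finset ℕ, m0 ∈ s →
      (∀ q : Word × Word, (∀ m ∈ s, q.1 m = u m ∧ q.2 m = w m) → Rel' q.1 q.2 → False) →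
      ∃ t ⊆ (RelSet)ᶜ, IsOpen t ∧ (u, w) ∈ t := by
    intro s hm0s href
    refine ⟨{q : Word × Word | ∀ m ∈ s, q.1 m = u m ∧ q.2 m = w m}, ?_, isOpen_pairCyl s u w, ?_⟩
    · intro q hq hrel; exact href q hq hrel
    · intro m _; exact ⟨rfl, rfl⟩
  -- within such a neighborhood, any TildeAt is located at m0
  have locfwd : ∀ (s : Finset ℕ) (q : Word × Word), m0 ∈ s →
      (∀ m ∈ s, q.1 m = u m ∧ q.2 m = w m) → ∀ ℓ, TildeAt q.1 q.2 ℓ → ℓ = m0 := by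
    intro s q hm0s hq ℓ ht
    refine ht.loc ?_
    rw [(hq m0 hm0s).1, (hq m0 hm0s).2]; exact hm0
  have locbwd : ∀ (s : Finset ℕ) (q : Word × Word), m0 ∈ s →
      (∀ m ∈ s, q.1 m = u m ∧ q.2 m = w m) → ∀ ℓ, TildeAt q.2 q.1 ℓ → ℓ = m0 := by
    intro s q hm0s hq ℓ ht
    refine ht.loc ?_
    rw [(hq m0 hm0s).1, (hq m0 hm0s).2]; exact hm0.symm
  by_cases hA : ∃ m1, m1 ≠ m0 ∧ u m1 ≠ w m1
  · obtain ⟨m1, hm1ne, hm1⟩ := hA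
    refine mk {m0, m1} (by simp) ?_
    rintro q hq (heq | ht | ht)
    · exact hm0 (by rw [← (hq m0 (by simp)).1, ← (hq m0 (by simp)).2, heq])
    · rcases tilde_iff.mp ht with ⟨ℓ, ha⟩
      have h1 := locfwd _ q (by simp) hq ℓ ha
      have h2 : ℓ = m1 := ha.loc (by rw [(hq m1 (by simp)).1, (hq m1 (by simp)).2]; exact hm1)
      exact hm1ne (h2 ▸ h1 ▸ rfl)
    · rcases tilde_iff.mp ht with ⟨ℓ, ha⟩
      have h1 := locbwd _ q (by simp) hq ℓ ha
      have h2 : ℓ = m1 := ha.loc (by rw [(hq m1 (by simp)).1, (hq m1 (by simp)).2]; exact hm1.symm)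
      exact hm1ne (h2 ▸ h1 ▸ rfl)
  · push_neg at hA
    -- words agree off m0
    by_cases hf : w m0 = u m0 + 1
    · -- forward step shape; Tilde u w fails in its conditions
      have hcondf : ¬ (((¬ Even (u m0) ∧ (u (m0 + 1) = 3 ∨ u (m0 + 1) = 4)) ∨
          (Even (u m0) ∧ (u (m0 + 1) = 1 ∨ u (m0 + 1) = 2))) ∧
          (∀ m, m0 + 2 ≤ m → u m = 0 ∨ u m = 5)) := by
        intro ⟨hc, htail⟩
        exact hfw (tilde_iff.mpr ⟨m0, fun m hm => hA m hm, hf, hc, htail⟩)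
      push_neg at hcondf
      by_cases hc : ((¬ Even (u m0) ∧ (u (m0 + 1) = 3 ∨ u (m0 + 1) = 4)) ∨
          (Even (u m0) ∧ (u (m0 + 1) = 1 ∨ u (m0 + 1) = 2)))
      · obtain ⟨k, hk, hk05⟩ := hcondf hc
        refine mk {m0, k} (by simp) ?_
        rintro q hq (heq | ht | ht)
        · exact hm0 (by rw [← (hq m0 (by simp)).1, ← (hq m0 (by simp)).2, heq])
        · rcases tilde_iff.mp ht with ⟨ℓ, ha⟩
          have h1 := locfwd _ q (by simp) hq ℓ ha
          rw [h1] at ha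
          have := ha.2.2.2 k hk
          rw [(hq k (by simp)).1] at this
          rcases this with h|h
          exacts [hk05.1 h, hk05.2 h]
        · rcases tilde_iff.mp ht with ⟨ℓ, ha⟩
          have h1 := locbwd _ q (by simp) hq ℓ ha
          rw [h1] at ha
          have : u m0 = w m0 + 1 := by
            rw [← (hq m0 (by simp)).1, ← (hq m0 (by simp)).2]; exact ha.2.1
          rw [hf] at this
          exact not_plus_two this
      · refine mk {m0, m0 + 1} (by simp) ?_
        rintro q hq (heq | ht | ht)
        · exact hm0 (by rw [← (hq m0 (by simp)).1, ← (hq m0 (by simp)).2, heq])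
        · rcases tilde_iff.mp ht with ⟨ℓ, ha⟩
          have h1 := locfwd _ q (by simp) hq ℓ ha
          rw [h1] at ha
          have := ha.2.2.1
          rw [(hq m0 (by simp)).1, (hq (m0+1) (by simp)).1] at this
          exact hc this
        · rcases tilde_iff.mp ht with ⟨ℓ, ha⟩
          have h1 := locbwd _ q (by simp) hq ℓ ha
          rw [h1] at ha
          have : u m0 = w m0 + 1 := by
            rw [← (hq m0 (by simp)).1, ← (hq m0 (by simp)).2]; exact ha.2.1
          rw [hf] at this
          exact not_plus_two this
    · by_cases hb : u m0 = w m0 + 1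
      · -- backward step shape; Tilde w u fails in its conditions
        have hcondb : ¬ (((¬ Even (w m0) ∧ (w (m0 + 1) = 3 ∨ w (m0 + 1) = 4)) ∨
            (Even (w m0) ∧ (w (m0 + 1) = 1 ∨ w (m0 + 1) = 2))) ∧
            (∀ m, m0 + 2 ≤ m → w m = 0 ∨ w m = 5)) := by
          intro ⟨hc, htail⟩
          exact hbw (tilde_iff.mpr ⟨m0, fun m hm => (hA m hm).symm, hb, hc, htail⟩)
        push_neg at hcondb
        by_cases hc : ((¬ Even (w m0) ∧ (w (m0 + 1) = 3 ∨ w (m0 + 1) = 4)) ∨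
            (Even (w m0) ∧ (w (m0 + 1) = 1 ∨ w (m0 + 1) = 2)))
        · obtain ⟨k, hk, hk05⟩ := hcondb hc
          refine mk {m0, k} (by simp) ?_
          rintro q hq (heq | ht | ht)
          · exact hm0 (by rw [← (hq m0 (by simp)).1, ← (hq m0 (by simp)).2, heq])
          · rcases tilde_iff.mp ht with ⟨ℓ, ha⟩
            have h1 := locfwd _ q (by simp) hq ℓ ha
            rw [h1] at ha
            have : w m0 = u m0 + 1 := by
              rw [← (hq m0 (by simp)).1, ← (hq m0 (by simp)).2]; exact ha.2.1
            rw [hb] at this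
            exact not_plus_two this
          · rcases tilde_iff.mp ht with ⟨ℓ, ha⟩
            have h1 := locbwd _ q (by simp) hq ℓ ha
            rw [h1] at ha
            have := ha.2.2.2 k hk
            rw [(hq k (by simp)).2] at this
            rcases this with h|h
            exacts [hk05.1 h, hk05.2 h]
        · refine mk {m0, m0 + 1} (by simp) ?_
          rintro q hq (heq | ht | ht)
          · exact hm0 (by rw [← (hq m0 (by simp)).1, ← (hq m0 (by simp)).2, heq])
          · rcases tilde_iff.mp ht with ⟨ℓ, ha⟩
            have h1 := locfwd _ q (by simp) hq ℓ ha
            rw [h1] at ha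
            have : w m0 = u m0 + 1 := by
              rw [← (hq m0 (by simp)).1, ← (hq m0 (by simp)).2]; exact ha.2.1
            rw [hb] at this
            exact not_plus_two this
          · rcases tilde_iff.mp ht with ⟨ℓ, ha⟩
            have h1 := locbwd _ q (by simp) hq ℓ ha
            rw [h1] at ha
            have := ha.2.2.1
            rw [(hq m0 (by simp)).2, (hq (m0+1) (by simp)).2] at this
            exact hc this
      · -- neither: fixing m0 alone suffices
        refine mk {m0} (by simp) ?_
        rintro q hq (heq | ht | ht)
        · exact hm0 (by rw [← (hq m0 (by simp)).1, ← (hq m0 (by simp)).2, heq])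
        · rcases tilde_iff.mp ht with ⟨ℓ, ha⟩
          have h1 := locfwd _ q (by simp) hq ℓ ha
          rw [h1] at ha
          refine hf ?_
          rw [← (hq m0 (by simp)).1, ← (hq m0 (by simp)).2]; exact ha.2.1
        · rcases tilde_iff.mp ht with ⟨ℓ, ha⟩
          have h1 := locbwd _ q (by simp) hq ℓ ha
          rw [h1] at ha
          refine hb ?_
          rw [← (hq m0 (by simp)).1, ← (hq m0 (by simp)).2]; exact ha.2.1

lemma piK_eq {u w : Word} : piK u = piK w ↔ Rel' u w := by
  constructor
  · intro h; exact eqvGen_iff.mp (Quotient.exact h)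
  · intro h; exact Quotient.sound (eqvGen_iff.mpr h)

lemma isClosed_sat {C : Set Word} (hC : IsClosed C) :
    IsClosed {x : Word | ∃ y ∈ C, Rel' x y} := by
  have he : {x : Word | ∃ y ∈ C, Rel' x y} = Prod.fst '' (RelSet ∩ (Set.univ ×ˢ C)) := by
    ext x
    constructor
    · rintro ⟨y, hy, hr⟩; exact ⟨(x, y), ⟨hr, ⟨trivial, hy⟩⟩, rfl⟩
    · rintro ⟨⟨a, b⟩, ⟨hr, ⟨-, hb⟩⟩, rfl⟩; exact ⟨b, hb, hr⟩
  rw [he]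
  exact (((isClosed_relSet.inter (isClosed_univ.prod hC)).isCompact).image continuous_fst).isClosed

/-- The open saturated set associated to an open set. -/
def satOpen (U : Set Word) : Set Word := {x | ∀ y, Rel' x y → y ∈ U}

lemma isOpen_satOpen {U : Set Word} (hU : IsOpen U) : IsOpen (satOpen U) := by
  have he : satOpen U = {x : Word | ∃ y ∈ Uᶜ, Rel' x y}ᶜ := by
    ext x
    simp only [satOpen, Set.mem_setOf_eq, Set.mem_compl_iff, not_exists, not_and]
    constructor
    · intro h y hy hr; exact hy (h y hr)
    · intro h y hr; by_contra hc; exact h y hc hr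
  rw [he]
  exact (isClosed_sat hU.isClosed_compl).isOpen_compl

lemma satOpen_subset {U : Set Word} : satOpen U ⊆ U := fun x hx => hx x (Or.inl rfl)

lemma preimage_image_satOpen (U : Set Word) :
    piK ⁻¹' (piK '' satOpen U) = satOpen U := by
  ext x
  constructor
  · rintro ⟨x', hx', he⟩
    have hr : Rel' x' x := piK_eq.mp he
    intro y hy
    exact hx' y (rel'_trans hr hy)
  · intro hx; exact ⟨x, hx, rfl⟩

lemma isOpen_image_satOpen {U : Set Word} (hU : IsOpen U) : IsOpen (piK '' satOpen U) := by
  have : IsOpen (piK ⁻¹' (piK '' satOpen U)) := by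
    rw [preimage_image_satOpen]; exact isOpen_satOpen hU
  exact isOpen_coinduced.mpr this

instance : T2Space Hexacarpet := by
  constructor
  rintro a b hab
  obtain ⟨u, rfl⟩ := Quotient.exists_rep a
  obtain ⟨v, rfl⟩ := Quotient.exists_rep b
  have hFaC : IsClosed {x : Word | Rel' x u} :=
    isClosed_relSet.preimage (continuous_id.prodMk continuous_const)
  have hFbC : IsClosed {x : Word | Rel' x v} :=
    isClosed_relSet.preimage (continuous_id.prodMk continuous_const)
  have hdisj : Disjoint {x : Word | Rel' x u} {x : Word | Rel' x v} := by
    rw [Set.disjoint_left]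
    intro x hxu hxv
    exact hab (piK_eq.mpr (rel'_trans (rel'_symm hxu) hxv))
  obtain ⟨U, V, hUo, hVo, hsU, hsV, hUV⟩ :=
    SeparatedNhds.of_isCompact_isCompact hFaC.isCompact hFbC.isCompact hdisj
  refine ⟨piK '' satOpen U, piK '' satOpen V, isOpen_image_satOpen hUo,
    isOpen_image_satOpen hVo, ⟨u, ?_, rfl⟩, ⟨v, ?_, rfl⟩, ?_⟩
  · intro y hy; exact hsU (rel'_symm hy)
  · intro y hy; exact hsV (rel'_symm hy)
  · rw [Set.disjoint_left]
    rintro q ⟨x, hx, rfl⟩ ⟨y, hy, he⟩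
    have hr : Rel' y x := piK_eq.mp he
    have h1 : x ∈ U := satOpen_subset hx
    have h2 : x ∈ V := satOpen_subset (fun z hz => hy z (rel'_trans hr hz))
    exact Set.disjoint_left.mp hUV h1 h2

/-! ### The explicit parametrization of the intersection -/

def gword (i : ZMod 6) (b : ℕ → Bool) : Word := fun n =>
  match n with
  | 0 => i
  | 1 => (if Even i then 1 else 3) + (if b 0 then 1 else 0)
  | (n + 2) => if b (n + 1) then 5 else 0

def gword' (i : ZMod 6) (b : ℕ → Bool) : Word := Function.update (gword i b) 0 (i + 1)

lemma gword_zero (i : ZMod 6) (b : ℕ → Bool) : gword i b 0 = i := rfl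

lemma gword_tail (i : ZMod 6) (b : ℕ → Bool) (m : ℕ) (hm : 2 ≤ m) :
    gword i b m = 0 ∨ gword i b m = 5 := by
  obtain ⟨k, rfl⟩ : ∃ k, m = k + 2 := ⟨m - 2, by omega⟩
  show (if b (k + 1) then (5 : ZMod 6) else 0) = 0 ∨ (if b (k + 1) then (5 : ZMod 6) else 0) = 5
  cases b (k + 1) <;> simp

lemma tilde_g (i : ZMod 6) (b : ℕ → Bool) : Tilde (gword i b) (gword' i b) := by
  refine ⟨0, fun m hm => absurd hm (Nat.not_lt_zero m), Function.update_self _ _ _,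
    fun m hm => (Function.update_of_ne (Nat.pos_iff_ne_zero.mp hm) _ _).symm, ?_, fun m hm => gword_tail i b m hm⟩
  rw [gword_zero]
  by_cases hEv : Even i
  · refine Or.inr ⟨hEv, ?_⟩
    show (if Even i then (1 : ZMod 6) else 3) + (if b 0 then 1 else 0) = 1 ∨
      (if Even i then (1 : ZMod 6) else 3) + (if b 0 then 1 else 0) = 2
    rw [if_pos hEv]
    cases b 0
    · left; norm_num
    · right; norm_num
  · refine Or.inl ⟨hEv, ?_⟩
    show (if Even i then (1 : ZMod 6) else 3) + (if b 0 then 1 else 0) = 3 ∨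
      (if Even i then (1 : ZMod 6) else 3) + (if b 0 then 1 else 0) = 4
    rw [if_neg hEv]
    cases b 0
    · left; norm_num
    · right; norm_num

lemma piK_g_mem (i : ZMod 6) (b : ℕ → Bool) :
    piK (gword i b) ∈ (piK '' cyl i) ∩ (piK '' cyl (i + 1)) := by
  refine ⟨⟨gword i b, rfl, rfl⟩, ⟨gword' i b, Function.update_self _ _ _, ?_⟩⟩
  exact (piK_eq.mpr (Or.inr (Or.inl (tilde_g i b)))).symm

lemma one_ne_zero6 : (1 : ZMod 6) ≠ 0 := by decide

lemma self_ne_add_one (x : ZMod 6) : x ≠ x + 1 := by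
  intro h; exact one_ne_zero6 (left_eq_add.mp h)

/-- Any point of the intersection forces `j = i ± 1`. -/
lemma mem_inter_cases {i j : ZMod 6} (hij : i ≠ j) {q : Hexacarpet}
    (hq : q ∈ (piK '' cyl i) ∩ (piK '' cyl j)) : j = i + 1 ∨ j = i - 1 := by
  obtain ⟨⟨u, hu, rfl⟩, ⟨w, hw, he⟩⟩ := hq
  have hr : Rel' u w := piK_eq.mp he.symm
  have h0 : u 0 ≠ w 0 := by rw [hu, hw]; exact hij
  rcases hr with rfl | ht | ht
  · exact absurd rfl h0
  · obtain ⟨ℓ, ha⟩ := tilde_iff.mp ht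
    have hl : ℓ = 0 := ha.loc h0
    subst hl
    left; rw [← hu, ← hw]; exact ha.2.1
  · obtain ⟨ℓ, ha⟩ := tilde_iff.mp ht
    have hl : ℓ = 0 := ha.loc h0.symm
    subst hl
    right
    have : u 0 = w 0 + 1 := ha.2.1
    rw [hu, hw] at this
    rw [eq_sub_iff_add_eq, ← this]

lemma no_tilde_g {i : ZMod 6} {b b' : ℕ → Bool} (h : Tilde (gword i b) (gword i b')) : False := by
  obtain ⟨ℓ, ha⟩ := tilde_iff.mp h
  rcases Nat.eq_zero_or_pos ℓ with rfl | hpos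
  · have : gword i b' 0 = gword i b 0 + 1 := ha.2.1
    rw [gword_zero, gword_zero] at this
    exact self_ne_add_one i this
  · have hc := cond_ne ha.cond'
    rcases gword_tail i b (ℓ + 1) (by omega) with h0 | h5
    · exact hc.1 h0
    · exact hc.2 h5

lemma g_inj {i : ZMod 6} : Function.Injective (gword i) := by
  intro b b' h
  funext n
  cases n with
  | zero =>
    have h1 := congrFun h 1
    have : (if Even i then (1:ZMod 6) else 3) + (if b 0 then 1 else 0) =
        (if Even i then (1:ZMod 6) else 3) + (if b' 0 then 1 else 0) := h1
    have h2 : (if b 0 then (1:ZMod 6) else 0) = (if b' 0 then 1 else 0) := by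
      exact add_left_cancel this
    cases hb : b 0 <;> cases hb' : b' 0 <;> rw [hb, hb'] at h2 <;> first | rfl | (exact absurd h2 (by decide))
  | succ k =>
    have h1 := congrFun h (k + 2)
    have h2 : (if b (k+1) then (5:ZMod 6) else 0) = (if b' (k+1) then 5 else 0) := h1
    cases hb : b (k+1) <;> cases hb' : b' (k+1) <;> rw [hb, hb'] at h2 <;>
      first | rfl | (exact absurd h2 (by decide))

lemma continuous_gword (i : ZMod 6) : Continuous (gword i) := by
  refine continuous_pi fun n => ?_
  match n with
  | 0 => exact continuous_const
  | 1 =>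
    show Continuous fun b : ℕ → Bool => (if Even i then (1:ZMod 6) else 3) + (if b 0 then 1 else 0)
    exact (continuous_of_discreteTopology
      (f := fun t : Bool => (if Even i then (1:ZMod 6) else 3) + (if t then 1 else 0))).comp
      (continuous_apply 0)
  | (k + 2) =>
    show Continuous fun b : ℕ → Bool => (if b (k+1) then (5:ZMod 6) else 0)
    exact (continuous_of_discreteTopology
      (f := fun t : Bool => (if t then (5:ZMod 6) else 0))).comp (continuous_apply (k+1))

lemma continuous_piK : Continuous piK := continuous_coinduced_rng

/-- Surjectivity: every point of the intersection is `piK (gword i b)`. -/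
lemma g_surj (i : ZMod 6) {q : Hexacarpet}
    (hq : q ∈ (piK '' cyl i) ∩ (piK '' cyl (i + 1))) : ∃ b : ℕ → Bool, piK (gword i b) = q := by
  obtain ⟨⟨u, hu, rfl⟩, ⟨w, hw, he⟩⟩ := hq
  have hr : Rel' u w := piK_eq.mp he.symm
  have h0 : u 0 ≠ w 0 := by rw [hu, hw]; exact self_ne_add_one i
  have ht : Tilde u w := by
    rcases hr with rfl | ht | ht
    · exact absurd rfl h0
    · exact ht
    · obtain ⟨ℓ, ha⟩ := tilde_iff.mp ht
      have hl : ℓ = 0 := ha.loc h0.symm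
      subst hl
      have : u 0 = w 0 + 1 := ha.2.1
      rw [hu, hw] at this
      exact (not_plus_two this).elim
  obtain ⟨ℓ, ha⟩ := tilde_iff.mp ht
  have hl : ℓ = 0 := ha.loc h0
  subst hl
  classical
  refine ⟨fun n => match n with
    | 0 => decide (u 1 = 2 ∨ u 1 = 4)
    | (n + 1) => decide (u (n + 2) = 5), ?_⟩
  suffices hgu : gword i (fun n => match n with
      | 0 => decide (u 1 = 2 ∨ u 1 = 4)
      | (n + 1) => decide (u (n + 2) = 5)) = u by rw [hgu]
  funext n
  match n with
  | 0 => rw [gword_zero, hu]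
  | 1 =>
    show (if Even i then (1:ZMod 6) else 3) + (if decide (u 1 = 2 ∨ u 1 = 4) then 1 else 0) = u 1
    rcases ha.2.2.1 with ⟨hp, hc⟩ | ⟨hp, hc⟩ <;> rw [hu] at hp <;> norm_num at hc <;>
      rcases hc with hc | hc <;> simp only [hp, hc, if_true, if_false, eq_self_iff_true,
        not_true, not_false_iff] <;> decide
  | (k + 2) =>
    show (if decide (u (k + 2) = 5) then (5:ZMod 6) else 0) = u (k + 2)
    rcases ha.2.2.2 (k + 2) (by omega) with h5 | h5 <;> rw [h5] <;> decide

lemma cantor_homeo (i : ZMod 6) :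
    Nonempty ((((piK '' cyl i) ∩ (piK '' cyl (i + 1)) : Set Hexacarpet)) ≃ₜ (ℕ → Bool)) := by
  set S := (piK '' cyl i) ∩ (piK '' cyl (i + 1)) with hS
  have hbij : Function.Bijective (fun b : ℕ → Bool => (⟨piK (gword i b), piK_g_mem i b⟩ : S)) := by
    constructor
    · intro b b' hbb
      have h : piK (gword i b) = piK (gword i b') := congrArg Subtype.val hbb
      rcases piK_eq.mp h with heq | ht | ht
      · exact g_inj heq
      · exact absurd (no_tilde_g ht) not_false
      · exact absurd (no_tilde_g ht) not_false
    · rintro ⟨q, hq⟩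
      obtain ⟨b, hb⟩ := g_surj i hq
      exact ⟨b, Subtype.ext hb⟩
  have hcont : Continuous (fun b : ℕ → Bool => (⟨piK (gword i b), piK_g_mem i b⟩ : S)) :=
    (continuous_piK.comp (continuous_gword i)).subtype_mk _
  have he : Continuous ((Equiv.ofBijective _ hbij : (ℕ → Bool) ≃ S)) := hcont
  exact ⟨(he.homeoOfEquivCompactToT2).symm⟩


/-- for distinct letters `i, j`, the set `π(C_i) ∩ π(C_j) ⊆ K` is empty
exactly when `j ≢ i ± 1 (mod 6)`, and otherwise it is homeomorphic to the Cantor space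
`{0,1}^ℕ`. -/
theorem stmt12 (i j : ZMod 6) (hij : i ≠ j) :
    ((piK '' cyl i) ∩ (piK '' cyl j) = ∅ ↔ (j ≠ i + 1 ∧ j ≠ i - 1)) ∧
    ((j = i + 1 ∨ j = i - 1) →
      Nonempty ((((piK '' cyl i) ∩ (piK '' cyl j) : Set Hexacarpet)) ≃ₜ (ℕ → Bool))) := by
  constructor
  · constructor
    · intro hemp
      constructor
      · rintro rfl
        rw [Set.eq_empty_iff_forall_notMem] at hemp
        exact hemp _ (piK_g_mem i (fun _ => false))
      · rintro rfl
        rw [Set.eq_empty_iff_forall_notMem] at hemp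
        have hji : (i - 1) + 1 = i := by ring
        have := piK_g_mem (i - 1) (fun _ => false)
        rw [hji] at this
        exact hemp _ ⟨this.2, this.1⟩
    · rintro ⟨h1, h2⟩
      rw [Set.eq_empty_iff_forall_notMem]
      intro q hq
      rcases mem_inter_cases hij hq with h | h
      · exact h1 h
      · exact h2 h
  · rintro (rfl | rfl)
    · exact cantor_homeo i
    · have hji : (i - 1) + 1 = i := by ring
      obtain ⟨e⟩ := cantor_homeo (i - 1)
      have hset : (piK '' cyl i) ∩ (piK '' cyl (i - 1)) =
          (piK '' cyl (i - 1)) ∩ (piK '' cyl ((i - 1) + 1)) := by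
        rw [hji, Set.inter_comm]
      exact ⟨(Homeomorph.setCongr hset).trans e⟩
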